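/- For i = 1, 2, let B_i be a finite-dimensional simple ℚ-algebra whose center K_i is a field (hence a number field), and suppose dim_{K_1} B_1 = dim_{K_2} B_2 = m^2 for some positive integer m. If φ : B_1 → B_2 is an injective ℚ-algebra homomorphism, then φ maps the center of B_1 into the center of B_2, i.e., φ(K_1) ⊆ K_2. -/

import Mathlib

/-!
Let `Kᵢ` be the centre of `Bᵢ` and `L = K₂ · φ(K₁)`, a subalgebra of `B₂` that commutes with
`φ(B₁)` and is a `K₁`-vector space through `φ`. Since `B₁` is simple with centre `K₁`, elements
of `B₂` commuting with `φ(B₁)` that are independent over `K₁` remain independent over `φ(B₁)`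
(a minimal-support argument). A `K₁`-basis of `L` thus embeds `B₁ ^ [L : K₁]` into `B₂`, so
`[L : ℚ] [B₁ : ℚ] ≤ [K₁ : ℚ] [B₂ : ℚ]`. As `[Bᵢ : ℚ] = [Kᵢ : ℚ] m²`, this reads
`[L : ℚ] ≤ [K₂ : ℚ]`, whence `L = K₂` and `φ(K₁) ⊆ K₂`.
-/

open Module

theorem IsSimpleRing.exists_ne_zero_forall_mem_center_of_bimodule {S J : Type*} [Ring S]
    [IsSimpleRing S] [Finite J] (N : AddSubgroup (J → S))
    (hl : ∀ s : S, ∀ g ∈ N, s • g ∈ N) (hr : ∀ s : S, ∀ g ∈ N, MulOpposite.op s • g ∈ N)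
    (hN : N ≠ ⊥) : ∃ g ∈ N, g ≠ 0 ∧ ∀ j, g j ∈ Set.center S := by
  obtain ⟨g₀, ⟨hg₀N, hg₀⟩, hmin⟩ :=
    (measure fun g : J → S => (Function.support g).ncard).wf.has_min {g | g ∈ N ∧ g ≠ 0}
      (N.bot_or_exists_ne_zero.resolve_left hN)
  obtain ⟨j₀, hj₀ : g₀ j₀ ≠ 0⟩ := Function.ne_iff.mp hg₀
  -- The `j₀`-th coordinates of elements of `N` supported in `supp g₀` form an ideal.
  let I : TwoSidedIdeal S :=
    .mk' {a | ∃ g ∈ N, Function.support g ⊆ Function.support g₀ ∧ g j₀ = a}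
    ⟨0, N.zero_mem, by simp, rfl⟩
    (by
      rintro _ _ ⟨g, hg, hgs, rfl⟩ ⟨g', hg', hgs', rfl⟩
      exact ⟨g + g', N.add_mem hg hg',
        (Function.support_add _ _).trans (Set.union_subset hgs hgs'), rfl⟩)
    (by
      rintro _ ⟨g, hg, hgs, rfl⟩
      exact ⟨-g, N.neg_mem hg, (Function.support_neg g).trans_subset hgs, rfl⟩)
    (by
      rintro s _ ⟨g, hg, hgs, rfl⟩
      exact ⟨s • g, hl s g hg, (Function.support_const_smul_subset s g).trans hgs, rfl⟩)
    (by
      rintro _ s ⟨g, hg, hgs, rfl⟩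
      exact ⟨MulOpposite.op s • g, hr s g hg,
        (Function.support_const_smul_subset _ g).trans hgs, rfl⟩)
  obtain ⟨g, hgN, hgs, hgj₀⟩ := (TwoSidedIdeal.mem_mk' ..).mp <|
    IsSimpleRing.one_mem_of_ne_zero_mem I hj₀ <|
      (TwoSidedIdeal.mem_mk' ..).mpr ⟨g₀, hg₀N, subset_rfl, rfl⟩
  refine ⟨g, hgN, Function.ne_iff.mpr ⟨j₀, by simp [hgj₀]⟩, fun j => ?_⟩
  refine Semigroup.mem_center_iff.mpr fun y => ?_
  -- The commutator with `y` vanishes at `j₀`, so has smaller support than `g₀`.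
  have hcomm : y • g - MulOpposite.op y • g = 0 := by
    by_contra hne
    refine hmin _ ⟨N.sub_mem (hl y g hgN) (hr y g hgN), hne⟩ ?_
    have hsupp : Function.support (y • g - MulOpposite.op y • g) ⊆
        Function.support g₀ \ {j₀} := by
      intro j hj
      refine ⟨hgs fun hgj => hj ?_, fun hjj => hj ?_⟩
      · simp [hgj]
      · simp [Set.mem_singleton_iff.mp hjj, hgj₀]
    exact (Set.ncard_le_ncard hsupp (Set.toFinite _)).trans_lt
      (Set.ncard_sdiff_singleton_lt_of_mem hj₀ (Set.toFinite _))
  simpa [sub_eq_zero] using congrFun hcomm j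

theorem IsSimpleRing.exists_central_relation_of_relation {S R J : Type*} [Ring S]
    [IsSimpleRing S] [Ring R] [Fintype J] (ψ : S →+* R) (l : J → R)
    (hl : ∀ s j, Commute (ψ s) (l j)) {g : J → S} (hg0 : g ≠ 0)
    (hg : ∑ j, ψ (g j) * l j = 0) :
    ∃ z : J → S, z ≠ 0 ∧ (∀ j, z j ∈ Set.center S) ∧ ∑ j, ψ (z j) * l j = 0 := by
  let F : (J → S) →+ R := AddMonoidHom.mk' (fun g => ∑ j, ψ (g j) * l j) fun g g' => by
    simp only [Pi.add_apply, map_add, add_mul, Finset.sum_add_distrib]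
  have hFl : ∀ (s : S) g, F (s • g) = ψ s * F g := fun s g => by
    simp [F, Finset.mul_sum, mul_assoc]
  have hFr : ∀ (s : S) g, F (MulOpposite.op s • g) = F g * ψ s := fun s g => by
    simp [F, Finset.sum_mul, mul_assoc, (hl s _).eq]
  obtain ⟨z, hz, hz0, hzc⟩ := exists_ne_zero_forall_mem_center_of_bimodule F.ker
    (fun s g hg => by simp_all [AddMonoidHom.mem_ker])
    (fun s g hg => by simp_all [AddMonoidHom.mem_ker])
    fun h => hg0 (AddSubgroup.mem_bot.mp (h ▸ hg))
  exact ⟨z, hz0, hzc, hz⟩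

theorem AlgHom.map_center_le_centralizer_range {F A B : Type*} [CommSemiring F] [Semiring A]
    [Semiring B] [Algebra F A] [Algebra F B] (ψ : A →ₐ[F] B) :
    (Subalgebra.center F A).map ψ ≤ Subalgebra.centralizer F (Set.range ψ) := by
  rintro _ ⟨a, ha, rfl⟩ _ ⟨b, rfl⟩
  exact (map_mul ψ b a).symm.trans ((congrArg ψ (Subalgebra.mem_center_iff.mp ha b)).trans
    (map_mul ψ a b))

theorem IsSimpleRing.finrank_center_mul_finrank_center (F S : Type*) [Field F] [Ring S]
    [Algebra F S] [IsSimpleRing S] :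
    finrank F (Subalgebra.center F S) * finrank (Subalgebra.center F S) S = finrank F S := by
  -- Stated for `Subalgebra.center`, so that the field structure extends its ring structure.
  have hK : IsField (Subalgebra.center F S) := IsSimpleRing.isField_center S
  let _ : Field (Subalgebra.center F S) := hK.toField
  exact Module.finrank_mul_finrank F (Subalgebra.center F S) S

theorem finrank_mul_finrank_le_of_le_centralizer {F S R : Type*} [Field F] [Ring S] [Ring R]
    [Algebra F S] [Algebra F R] [IsSimpleRing S] [FiniteDimensional F S] [FiniteDimensional F R]
    (ψ : S →ₐ[F] R) (L : Subalgebra F R) (hcenter : (Subalgebra.center F S).map ψ ≤ L)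
    (hL : L ≤ Subalgebra.centralizer F (Set.range ψ)) :
    finrank F L * finrank F S ≤ finrank F (Subalgebra.center F S) * finrank F R := by
  set K := Subalgebra.center F S
  have hK : IsField K := IsSimpleRing.isField_center S
  let _ : Field K := hK.toField
  let ρ : K →ₐ[F] L := (ψ.comp K.val).codRestrict L fun k => hcenter ⟨k, k.2, rfl⟩
  let _ : Module K L := Module.compHom L ρ.toRingHom
  have : IsScalarTower F K L := ⟨fun c k x => by
    show ρ (c • k) * x = c • (ρ k * x)
    rw [map_smul, smul_mul_assoc]⟩
  have : FiniteDimensional K L := Module.Finite.of_restrictScalars_finite F K L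
  let b := Module.finBasis K L
  let f : (Fin (finrank K L) → S) →ₗ[F] R :=
    ∑ j, LinearMap.mulRight F (b j : R) ∘ₗ ψ.toLinearMap ∘ₗ LinearMap.proj j
  have hf : ∀ g, f g = ∑ j, ψ (g j) * b j := fun g => by simp [f]
  have hf_inj : Function.Injective f := by
    refine (injective_iff_map_eq_zero f).mpr fun g hg => ?_
    by_contra hg0
    have hb : ∀ s j, Commute (ψ s) (b j : R) := fun s j =>
      (Subalgebra.mem_centralizer_iff F).mp (hL (b j).2) _ ⟨s, rfl⟩
    obtain ⟨z, hz0, hzc, hz⟩ := IsSimpleRing.exists_central_relation_of_relation ψ.toRingHom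
      (fun j => (b j : R)) hb hg0 ((hf g).symm.trans hg)
    have hc := Fintype.linearIndependent_iff.mp b.linearIndependent (fun j => ⟨z j, hzc j⟩) <|
      Subtype.ext <| (AddSubmonoidClass.coe_finsetSum _ _).trans hz
    exact hz0 (funext fun j => congrArg Subtype.val (hc j))
  have hfinrank := LinearMap.finrank_le_finrank_of_injective hf_inj
  rw [Module.finrank_pi_fintype, Finset.sum_const, Finset.card_univ, Fintype.card_fin,
    smul_eq_mul] at hfinrank
  rw [← Module.finrank_mul_finrank F K L, mul_assoc]
  exact Nat.mul_le_mul_left _ hfinrank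

theorem injective_algHom_maps_center_into_center_general
    (B₁ B₂ : Type*) [Ring B₁] [Ring B₂] [Algebra ℚ B₁] [Algebra ℚ B₂]
    [FiniteDimensional ℚ B₁] [FiniteDimensional ℚ B₂]
    [IsSimpleRing B₁] [IsSimpleRing B₂]
    (m : ℕ)
    (hd₁ : Module.finrank (Subalgebra.center ℚ B₁) B₁ = m ^ 2)
    (hd₂ : Module.finrank (Subalgebra.center ℚ B₂) B₂ = m ^ 2)
    (φ : B₁ →ₐ[ℚ] B₂) :
    ∀ x ∈ Subalgebra.center ℚ B₁, φ x ∈ Subalgebra.center ℚ B₂ := by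
  set K₁ := Subalgebra.center ℚ B₁
  set K₂ := Subalgebra.center ℚ B₂
  set L := K₂ ⊔ K₁.map φ
  have hL : L ≤ Subalgebra.centralizer ℚ (Set.range φ) :=
    sup_le (Subalgebra.center_le_centralizer ℚ _) φ.map_center_le_centralizer_range
  have hdim := finrank_mul_finrank_le_of_le_centralizer φ L le_sup_right hL
  have hpos : 0 < finrank ℚ K₁ * m ^ 2 := by
    rw [← hd₁, IsSimpleRing.finrank_center_mul_finrank_center]
    exact Module.finrank_pos
  rw [← IsSimpleRing.finrank_center_mul_finrank_center ℚ B₁,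
    ← IsSimpleRing.finrank_center_mul_finrank_center ℚ B₂, hd₁, hd₂] at hdim
  have hle : finrank ℚ L ≤ finrank ℚ K₂ :=
    le_of_mul_le_mul_right (by linarith) hpos
  have hK₂ : K₂ = L := Subalgebra.eq_of_le_of_finrank_le le_sup_left hle
  intro x hx
  exact hK₂ ▸ (le_sup_right : K₁.map φ ≤ L) ⟨x, hx, rfl⟩

/-- For `i = 1, 2`, let `Bᵢ` be a finite-dimensional simple `ℚ`-algebra whose
center `Kᵢ` is a field, with `dim_{K₁} B₁ = dim_{K₂} B₂ = m ^ 2` for a positive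
integer `m`.  If `φ : B₁ → B₂` is an injective `ℚ`-algebra homomorphism, then
`φ` maps the center of `B₁` into the center of `B₂`. -/
theorem injective_algHom_maps_center_into_center
    (B₁ B₂ : Type*) [Ring B₁] [Ring B₂] [Algebra ℚ B₁] [Algebra ℚ B₂]
    [FiniteDimensional ℚ B₁] [FiniteDimensional ℚ B₂]
    [IsSimpleRing B₁] [IsSimpleRing B₂]
    (hK₁ : IsField (Subalgebra.center ℚ B₁))
    (hK₂ : IsField (Subalgebra.center ℚ B₂))
    (m : ℕ) (hm : 0 < m)
    (hd₁ : Module.finrank (Subalgebra.center ℚ B₁) B₁ = m ^ 2)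
    (hd₂ : Module.finrank (Subalgebra.center ℚ B₂) B₂ = m ^ 2)
    (φ : B₁ →ₐ[ℚ] B₂) (hφ : Function.Injective φ) :
    ∀ x ∈ Subalgebra.center ℚ B₁, φ x ∈ Subalgebra.center ℚ B₂ :=
  injective_algHom_maps_center_into_center_general B₁ B₂ m hd₁ hd₂ φ
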